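/- arXiv:1312.3135 — 3 statements merged into one kernel-verified Lean document; each statement's English description precedes it below -/
import Mathlib

section
/- For every measurable function u: G → [0,∞) on an open set G ⊂ ℝⁿ with finite fractional seminorm |u|_{W^{δ,1}(G)}, the fractional coarea formula holds: (1/2)|u|_{W^{δ,1}(G)} = ∫₀^∞ P_δ({u > t}, G) dt, where P_δ(A,G) = ∫_A ∫_{G\A} |x−y|^{−n−δ} dy dx. -/
open MeasureTheory Set Metric Filter
open scoped ENNReal Topology

noncomputable def fracSemi (n : ℕ) (δ : ℝ) (G : Set (EuclideanSpace ℝ (Fin n)))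
    (u : EuclideanSpace ℝ (Fin n) → ℝ) : ℝ≥0∞ :=
  ∫⁻ x in G, ∫⁻ y in G, ENNReal.ofReal (|u x - u y| / ‖x - y‖ ^ ((n : ℝ) + δ))

noncomputable def fracPerim (n : ℕ) (δ : ℝ) (A G : Set (EuclideanSpace ℝ (Fin n))) : ℝ≥0∞ :=
  ∫⁻ x in A, ∫⁻ y in G \ A, ENNReal.ofReal (1 / ‖x - y‖ ^ ((n : ℝ) + δ))

noncomputable def fracCap (n : ℕ) (δ : ℝ) (K G : Set (EuclideanSpace ℝ (Fin n))) : ℝ≥0∞ :=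
  ⨅ (u : EuclideanSpace ℝ (Fin n) → ℝ) (_ : Continuous u ∧ HasCompactSupport u ∧
    tsupport u ⊆ G ∧ ∀ x ∈ K, 1 ≤ u x), fracSemi n δ G u

/-!
Writing |a - b| = (a - b)⁺ + (b - a)⁺ and using the symmetry of the kernel, the seminorm is twice
∬ (u x - u y)⁺ k(x, y). For u ≥ 0, (u x - u y)⁺ is the length of {t > 0 | u y ≤ t < u x}, so by
Tonelli the double integral becomes ∫₀^∞ of the kernel integrated over {u > t} × {u ≤ t}, which is the
perimeter of the superlevel set.
-/

section NonlocalCoarea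

variable {α : Type*} [MeasurableSpace α] {μ : Measure α} {K : α → α → ℝ≥0∞}

lemma ofReal_sub_eq_lintegral_indicator_mul {a b : ℝ} (hb : 0 ≤ b) :
    ENNReal.ofReal (a - b) = ∫⁻ t in Ioi 0, (Iio a).indicator 1 t * (Ici b).indicator 1 t := by
  have hIco : Iio a ∩ Ici b ∩ Ici 0 = Ico b a := by
    ext t
    simp only [mem_inter_iff, mem_Iio, mem_Ici, mem_Ico]
    constructor
    · rintro ⟨⟨hta, hbt⟩, -⟩
      exact ⟨hbt, hta⟩
    · rintro ⟨hbt, hta⟩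
      exact ⟨⟨hta, hbt⟩, hb.trans hbt⟩
  have hmeas : MeasurableSet (Iio a ∩ Ici b) := measurableSet_Iio.inter measurableSet_Ici
  have hmul : ∀ t, (Iio a).indicator 1 t * (Ici b).indicator 1 t =
      (Iio a ∩ Ici b).indicator (1 : ℝ → ℝ≥0∞) t := fun t => by rw [inter_indicator_one]; rfl
  rw [lintegral_congr hmul, lintegral_indicator_one hmeas, Measure.restrict_congr_set Ioi_ae_eq_Ici,
    Measure.restrict_apply hmeas, hIco, Real.volume_Ico]

lemma measurable_indicator_Iio_one {β : Type*} [MeasurableSpace β] {f g : β → ℝ}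
    (hf : Measurable f) (hg : Measurable g) :
    Measurable fun q => (Iio (f q)).indicator (1 : ℝ → ℝ≥0∞) (g q) :=
  measurable_one.indicator (measurableSet_lt hg hf)

lemma measurable_indicator_Ici_one {β : Type*} [MeasurableSpace β] {f g : β → ℝ}
    (hf : Measurable f) (hg : Measurable g) :
    Measurable fun q => (Ici (f q)).indicator (1 : ℝ → ℝ≥0∞) (g q) :=
  measurable_one.indicator (measurableSet_le hf hg)

lemma ofReal_abs_sub_eq_add (a b : ℝ) :
    ENNReal.ofReal |a - b| = ENNReal.ofReal (a - b) + ENNReal.ofReal (b - a) := by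
  rcases le_total a b with hab | hab
  · rw [abs_sub_comm, abs_of_nonneg (sub_nonneg.2 hab), ENNReal.ofReal_of_nonpos (sub_nonpos.2 hab),
      zero_add]
  · rw [abs_of_nonneg (sub_nonneg.2 hab), ENNReal.ofReal_of_nonpos (sub_nonpos.2 hab), add_zero]

lemma lintegral_lintegral_add_swap_mul [SFinite μ] (hK : Measurable (Function.uncurry K))
    (hKsymm : ∀ x y, K x y = K y x) {F : α → α → ℝ≥0∞} (hF : Measurable (Function.uncurry F)) :
    ∫⁻ x, ∫⁻ y, (F x y + F y x) * K x y ∂μ ∂μ = 2 * ∫⁻ x, ∫⁻ y, F x y * K x y ∂μ ∂μ := by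
  have hFK : Measurable fun p : α × α => F p.1 p.2 * K p.1 p.2 := hF.mul hK
  have hswap : ∫⁻ x, ∫⁻ y, F y x * K x y ∂μ ∂μ = ∫⁻ x, ∫⁻ y, F x y * K x y ∂μ ∂μ :=
    calc ∫⁻ x, ∫⁻ y, F y x * K x y ∂μ ∂μ = ∫⁻ x, ∫⁻ y, F y x * K y x ∂μ ∂μ :=
          lintegral_congr fun x => lintegral_congr fun y => by rw [hKsymm]
      _ = ∫⁻ x, ∫⁻ y, F x y * K x y ∂μ ∂μ :=
          lintegral_lintegral_swap (f := fun x y => F y x * K y x)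
            (hFK.comp measurable_swap).aemeasurable
  calc ∫⁻ x, ∫⁻ y, (F x y + F y x) * K x y ∂μ ∂μ
      = ∫⁻ x, ((∫⁻ y, F x y * K x y ∂μ) + ∫⁻ y, F y x * K x y ∂μ) ∂μ :=
        lintegral_congr fun x => by
          simp_rw [add_mul]
          exact lintegral_add_left (hFK.comp measurable_prodMk_left) _
    _ = 2 * ∫⁻ x, ∫⁻ y, F x y * K x y ∂μ ∂μ := by
        rw [lintegral_add_left hFK.lintegral_prod_right', hswap, two_mul]

variable {u : α → ℝ}

lemma lintegral_lintegral_indicator_mul_eq_setLIntegral (hu : Measurable u) (t : ℝ) :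
    ∫⁻ x, ∫⁻ y, (Iio (u x)).indicator 1 t * (Ici (u y)).indicator 1 t * K x y ∂μ ∂μ =
      ∫⁻ x in {x | t < u x}, ∫⁻ y in {y | t < u y}ᶜ, K x y ∂μ ∂μ := by
  have hA : MeasurableSet {x | t < u x} := measurableSet_lt measurable_const hu
  rw [← lintegral_indicator hA]
  refine lintegral_congr fun x => ?_
  by_cases hx : t < u x
  · rw [indicator_of_mem (show x ∈ {x | t < u x} from hx), ← lintegral_indicator hA.compl]
    refine lintegral_congr fun y => ?_
    by_cases hy : t < u y <;> simp [indicator, hx, hy]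
  · simp [indicator, hx]

lemma lintegral_lintegral_ofReal_sub_mul [SFinite μ] (hK : Measurable (Function.uncurry K))
    (hu : Measurable u) (hu0 : ∀ x, 0 ≤ u x) :
    ∫⁻ x, ∫⁻ y, ENNReal.ofReal (u x - u y) * K x y ∂μ ∂μ =
      ∫⁻ t in Ioi 0, ∫⁻ x in {x | t < u x}, ∫⁻ y in {y | t < u y}ᶜ, K x y ∂μ ∂μ := by
  set H : (α × α) × ℝ → ℝ≥0∞ := fun q =>
    (Iio (u q.1.1)).indicator 1 q.2 * (Ici (u q.1.2)).indicator 1 q.2 * K q.1.1 q.1.2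
  have hH : Measurable H :=
    ((measurable_indicator_Iio_one (hu.comp measurable_fst.fst) measurable_snd).mul
      (measurable_indicator_Ici_one (hu.comp measurable_fst.snd) measurable_snd)).mul
      (hK.comp measurable_fst)
  have hlayer : ∀ p : α × α,
      ENNReal.ofReal (u p.1 - u p.2) * K p.1 p.2 = ∫⁻ t in Ioi 0, H (p, t) := fun p => by
    have hmeas : Measurable fun t => (Iio (u p.1)).indicator (1 : ℝ → ℝ≥0∞) t *
        (Ici (u p.2)).indicator 1 t :=
      (measurable_indicator_Iio_one measurable_const measurable_id).mul
        (measurable_indicator_Ici_one measurable_const measurable_id)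
    rw [ofReal_sub_eq_lintegral_indicator_mul (hu0 p.2), ← lintegral_mul_const _ hmeas]
  calc ∫⁻ x, ∫⁻ y, ENNReal.ofReal (u x - u y) * K x y ∂μ ∂μ
      = ∫⁻ p, (∫⁻ t in Ioi 0, H (p, t)) ∂μ.prod μ := by
        rw [lintegral_prod _ hH.lintegral_prod_right'.aemeasurable]
        exact lintegral_congr fun x => lintegral_congr fun y => hlayer (x, y)
    _ = ∫⁻ t in Ioi 0, ∫⁻ p, H (p, t) ∂μ.prod μ :=
        lintegral_lintegral_swap (f := fun p t => H (p, t)) hH.aemeasurable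
    _ = ∫⁻ t in Ioi 0, ∫⁻ x in {x | t < u x}, ∫⁻ y in {y | t < u y}ᶜ, K x y ∂μ ∂μ := by
        refine lintegral_congr fun t => ?_
        rw [lintegral_prod (fun p => H (p, t)) (hH.comp measurable_prodMk_right).aemeasurable]
        exact lintegral_lintegral_indicator_mul_eq_setLIntegral hu t

theorem nonlocal_coarea [SFinite μ] (hK : Measurable (Function.uncurry K))
    (hKsymm : ∀ x y, K x y = K y x) (hu : Measurable u) (hu0 : ∀ x, 0 ≤ u x) :
    ∫⁻ x, ∫⁻ y, ENNReal.ofReal |u x - u y| * K x y ∂μ ∂μ =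
      2 * ∫⁻ t in Ioi 0, ∫⁻ x in {x | t < u x}, ∫⁻ y in {y | t < u y}ᶜ, K x y ∂μ ∂μ := by
  have hF : Measurable (Function.uncurry fun x y => ENNReal.ofReal (u x - u y)) :=
    ((hu.comp measurable_fst).sub (hu.comp measurable_snd)).ennreal_ofReal
  simp_rw [ofReal_abs_sub_eq_add]
  rw [lintegral_lintegral_add_swap_mul hK hKsymm hF, lintegral_lintegral_ofReal_sub_mul hK hu hu0]

end NonlocalCoarea

noncomputable def fracKernel (n : ℕ) (δ : ℝ) (x y : EuclideanSpace ℝ (Fin n)) : ℝ≥0∞ :=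
  ENNReal.ofReal (1 / ‖x - y‖ ^ ((n : ℝ) + δ))

lemma fracKernel_comm (n : ℕ) (δ : ℝ) (x y : EuclideanSpace ℝ (Fin n)) :
    fracKernel n δ x y = fracKernel n δ y x := by
  rw [fracKernel, fracKernel, norm_sub_rev]

lemma measurable_uncurry_fracKernel (n : ℕ) (δ : ℝ) :
    Measurable (Function.uncurry (fracKernel n δ)) := by
  unfold fracKernel
  fun_prop

lemma fracSemi_eq_lintegral_mul_fracKernel (n : ℕ) (δ : ℝ) (G : Set (EuclideanSpace ℝ (Fin n)))
    (u : EuclideanSpace ℝ (Fin n) → ℝ) :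
    fracSemi n δ G u = ∫⁻ x in G, ∫⁻ y in G, ENNReal.ofReal |u x - u y| * fracKernel n δ x y := by
  refine lintegral_congr fun x => lintegral_congr fun y => ?_
  rw [fracKernel, ← ENNReal.ofReal_mul (abs_nonneg _), mul_one_div]

lemma fracPerim_inter_eq (n : ℕ) (δ : ℝ) {A : Set (EuclideanSpace ℝ (Fin n))} (hA : MeasurableSet A)
    (G : Set (EuclideanSpace ℝ (Fin n))) :
    fracPerim n δ (G ∩ A) G =
      ∫⁻ x in A, ∫⁻ y in Aᶜ, fracKernel n δ x y ∂volume.restrict G ∂volume.restrict G := by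
  rw [Measure.restrict_restrict hA, Measure.restrict_restrict hA.compl, inter_comm A G,
    ← sdiff_eq_compl_inter, fracPerim, sdiff_self_inter]
  rfl

theorem fractional_coarea_general (n : ℕ) (δ : ℝ)
    (G : Set (EuclideanSpace ℝ (Fin n)))
    (u : EuclideanSpace ℝ (Fin n) → ℝ) (hu : Measurable u) (hu0 : ∀ x, 0 ≤ u x) :
    fracSemi n δ G u = 2 * ∫⁻ t in Set.Ioi (0 : ℝ), fracPerim n δ {x ∈ G | t < u x} G := by
  rw [fracSemi_eq_lintegral_mul_fracKernel,
    nonlocal_coarea (measurable_uncurry_fracKernel n δ) (fracKernel_comm n δ) hu hu0]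
  congr 1
  exact lintegral_congr fun t => (fracPerim_inter_eq n δ (measurableSet_lt measurable_const hu) G).symm

theorem fractional_coarea (n : ℕ) (δ : ℝ) (hδ : 0 < δ) (hδ1 : δ < 1)
    (G : Set (EuclideanSpace ℝ (Fin n))) (hG : IsOpen G)
    (u : EuclideanSpace ℝ (Fin n) → ℝ) (hu : Measurable u) (hu0 : ∀ x, 0 ≤ u x)
    (hfin : fracSemi n δ G u < ⊤) :
    fracSemi n δ G u = 2 * ∫⁻ t in Set.Ioi (0 : ℝ), fracPerim n δ {x ∈ G | t < u x} G :=
  fractional_coarea_general n δ G u hu hu0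
end

section
/- If G ⊂ ℝⁿ is open, 0 < δ < 1, 1 ≤ q < ∞, C > 0, and the fractional Sobolev inequality (∫_G |u|^q dx)^{1/q} ≤ C|u|_{W^{δ,1}(G)} holds for all measurable u: G → ℝ with compact support in G, then the fractional isocapacitary inequality |K|^{1/q} ≤ C·cap_{δ,1}(K,G) holds for every compact K ⊂ G. -/
/-!
A test function `u` admissible for `cap_{δ,1}(K, G)` satisfies `u ≥ 1` on `K`, so
`|K| ≤ ∫_G |u|^q`; the Sobolev inequality bounds the right side by `C |u|_{W^{δ,1}(G)}`, and
taking the infimum over `u` gives the isocapacitary inequality.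
-/

open MeasureTheory Set Metric Filter
open scoped ENNReal Topology

lemma measure_le_setLIntegral_rpow_abs {α : Type*} [MeasurableSpace α] {μ : Measure α}
    {K G : Set α} {u : α → ℝ} {q : ℝ} (hq : 0 ≤ q) (hK : MeasurableSet K) (hKG : K ⊆ G)
    (hu : ∀ x ∈ K, 1 ≤ u x) :
    μ K ≤ ∫⁻ x in G, ENNReal.ofReal (|u x| ^ q) ∂μ :=
  calc μ K = ∫⁻ _ in K, 1 ∂μ := (setLIntegral_one K).symm
    _ ≤ ∫⁻ x in K, ENNReal.ofReal (|u x| ^ q) ∂μ := by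
        refine setLIntegral_mono' hK fun x hx => ?_
        have hux : 1 ≤ |u x| := (hu x hx).trans (le_abs_self _)
        simpa using ENNReal.ofReal_le_ofReal (Real.one_le_rpow hux hq)
    _ ≤ ∫⁻ x in G, ENNReal.ofReal (|u x| ^ q) ∂μ := lintegral_mono_set hKG

lemma le_mul_fracCap {n : ℕ} {δ : ℝ} {K G : Set (EuclideanSpace ℝ (Fin n))} {a c : ℝ≥0∞}
    (hc₀ : c ≠ 0) (hc : c ≠ ∞)
    (h : ∀ u : EuclideanSpace ℝ (Fin n) → ℝ, Continuous u → HasCompactSupport u →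
      tsupport u ⊆ G → (∀ x ∈ K, 1 ≤ u x) → a ≤ c * fracSemi n δ G u) :
    a ≤ c * fracCap n δ K G := by
  simp only [fracCap, ENNReal.mul_iInf_of_ne hc₀ hc]
  exact le_iInf₂ fun u ⟨hcont, hcs, hsupp, hK⟩ => h u hcont hcs hsupp hK

theorem sobolev_implies_isocapacitary_general (n : ℕ) (δ q C : ℝ)
    (hq : 1 ≤ q) (hC : 0 < C)
    (G : Set (EuclideanSpace ℝ (Fin n)))
    (hsob : ∀ u : EuclideanSpace ℝ (Fin n) → ℝ, Measurable u → HasCompactSupport u → tsupport u ⊆ G →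
      (∫⁻ x in G, ENNReal.ofReal (|u x| ^ q)) ^ (1 / q) ≤
        ENNReal.ofReal C * fracSemi n δ G u) :
    ∀ K : Set (EuclideanSpace ℝ (Fin n)), IsCompact K → K ⊆ G →
      volume K ^ (1 / q) ≤ ENNReal.ofReal C * fracCap n δ K G := by
  intro K hK hKG
  refine le_mul_fracCap (ENNReal.ofReal_pos.mpr hC).ne' ENNReal.ofReal_ne_top
    fun u hcont hcs hsupp hu => ?_
  calc volume K ^ (1 / q)
      ≤ (∫⁻ x in G, ENNReal.ofReal (|u x| ^ q)) ^ (1 / q) :=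
        ENNReal.rpow_le_rpow
          (measure_le_setLIntegral_rpow_abs (by linarith) hK.measurableSet hKG hu)
          (by positivity)
    _ ≤ ENNReal.ofReal C * fracSemi n δ G u := hsob u hcont.measurable hcs hsupp

theorem sobolev_implies_isocapacitary (n : ℕ) (δ q C : ℝ)
    (hδ : 0 < δ) (hδ1 : δ < 1) (hq : 1 ≤ q) (hC : 0 < C)
    (G : Set (EuclideanSpace ℝ (Fin n))) (hG : IsOpen G)
    (hsob : ∀ u : EuclideanSpace ℝ (Fin n) → ℝ, Measurable u → HasCompactSupport u → tsupport u ⊆ G →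
      (∫⁻ x in G, ENNReal.ofReal (|u x| ^ q)) ^ (1 / q) ≤
        ENNReal.ofReal C * fracSemi n δ G u) :
    ∀ K : Set (EuclideanSpace ℝ (Fin n)), IsCompact K → K ⊆ G →
      volume K ^ (1 / q) ≤ ENNReal.ofReal C * fracCap n δ K G :=
  sobolev_implies_isocapacitary_general n δ q C hq hC G hsob
end

section
/- If G ⊂ ℝⁿ is open, 0 < p < ∞, 0 < δ < 1, K ⊂ G is compact, and u: G → ℝ is measurable with ∫_G∫_G |u(x)−u(y)|^p/|x−y|^{n+δp} dy dx < ∞, then u ∈ L^p(K). -/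
open MeasureTheory Set Metric Filter
open scoped ENNReal Topology

/-! The double integral is finite, so for almost every `x₀ ∈ G` the inner integral
`∫_G |u x₀ - u y|^p / ‖x₀ - y‖^(n + δp) dy` is finite. On the bounded set `K` the weight
`‖x₀ - y‖^(n + δp)` is bounded, so `u x₀ - u ∈ Lᵖ(K)`; since `K` has finite measure the
constant `u x₀` lies in `Lᵖ(K)` too, hence so does `u`. -/

lemma le_rpow_mul_div_rpow {a d R e : ℝ} (ha : 0 ≤ a) (hd : 0 ≤ d) (hdR : d ≤ R) (he : 0 ≤ e)
    (h0 : d = 0 → a = 0) : a ≤ R ^ e * (a / d ^ e) := by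
  rcases hd.eq_or_lt with rfl | hd
  · simp [h0 rfl]
  · calc a = d ^ e * (a / d ^ e) := (mul_div_cancel₀ a (Real.rpow_pos_of_pos hd e).ne').symm
      _ ≤ R ^ e * (a / d ^ e) := by gcongr

lemma exists_lintegral_lt_top_of_lintegral_lintegral_lt_top {α β : Type*} [MeasurableSpace α]
    [MeasurableSpace β] {μ : Measure α} {ν : Measure β} [SFinite ν] (hμ : μ ≠ 0)
    {f : α → β → ℝ≥0∞} (hf : Measurable (Function.uncurry f))
    (h : ∫⁻ x, ∫⁻ y, f x y ∂ν ∂μ < ∞) : ∃ x, ∫⁻ y, f x y ∂ν < ∞ :=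
  have := ae_neBot.2 hμ
  (ae_lt_top hf.lintegral_prod_right' h.ne).exists

lemma memLp_ofReal_of_lintegral_ofReal_abs_rpow_lt_top {α : Type*} [MeasurableSpace α]
    {μ : Measure α} {f : α → ℝ} {p : ℝ} (hp : 0 < p) (hf : AEStronglyMeasurable f μ)
    (h : ∫⁻ x, ENNReal.ofReal (|f x| ^ p) ∂μ < ∞) : MemLp f (ENNReal.ofReal p) μ := by
  refine ⟨hf, ?_⟩
  rw [eLpNorm_lt_top_iff_lintegral_rpow_enorm_lt_top (by simpa using hp) ENNReal.ofReal_ne_top,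
    ENNReal.toReal_ofReal hp.le]
  simpa [Real.enorm_eq_ofReal_abs, ENNReal.ofReal_rpow_of_nonneg (abs_nonneg _) hp.le] using h

section Bounded

variable {E : Type*} [NormedAddCommGroup E] [MeasurableSpace E] {μ : Measure E} {K : Set E}
  {u : E → ℝ} {p e : ℝ}

lemma setLIntegral_abs_sub_rpow_lt_top_of_isBounded (hKm : MeasurableSet K)
    (hKb : Bornology.IsBounded K) (hp : 0 < p) (he : 0 ≤ e) (x₀ : E)
    (h : ∫⁻ y in K, ENNReal.ofReal (|u x₀ - u y| ^ p / ‖x₀ - y‖ ^ e) ∂μ < ∞) :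
    ∫⁻ y in K, ENNReal.ofReal (|u x₀ - u y| ^ p) ∂μ < ∞ := by
  obtain ⟨R, hR0, hR⟩ := hKb.subset_closedBall_lt 0 x₀
  have hdist : ∀ y ∈ K, ‖x₀ - y‖ ≤ R := fun y hy => by
    simpa [mem_closedBall', dist_eq_norm, norm_sub_rev] using hR hy
  have hpt : ∀ y ∈ K, ENNReal.ofReal (|u x₀ - u y| ^ p) ≤
      ENNReal.ofReal (R ^ e) * ENNReal.ofReal (|u x₀ - u y| ^ p / ‖x₀ - y‖ ^ e) := by
    intro y hy
    rw [← ENNReal.ofReal_mul (Real.rpow_nonneg hR0.le e)]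
    refine ENNReal.ofReal_le_ofReal
      (le_rpow_mul_div_rpow (by positivity) (norm_nonneg _) (hdist y hy) he fun hxy => ?_)
    rw [norm_eq_zero, sub_eq_zero] at hxy
    simp [hxy, hp.ne']
  calc ∫⁻ y in K, ENNReal.ofReal (|u x₀ - u y| ^ p) ∂μ
      ≤ ∫⁻ y in K, ENNReal.ofReal (R ^ e) *
          ENNReal.ofReal (|u x₀ - u y| ^ p / ‖x₀ - y‖ ^ e) ∂μ := setLIntegral_mono' hKm hpt
    _ = ENNReal.ofReal (R ^ e) *
          ∫⁻ y in K, ENNReal.ofReal (|u x₀ - u y| ^ p / ‖x₀ - y‖ ^ e) ∂μ :=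
        lintegral_const_mul' _ _ ENNReal.ofReal_ne_top
    _ < ∞ := ENNReal.mul_lt_top ENNReal.ofReal_lt_top h

lemma memLp_restrict_of_setLIntegral_div_rpow_lt_top (hKm : MeasurableSet K)
    (hKb : Bornology.IsBounded K) (hμK : μ K ≠ ∞) (hu : AEStronglyMeasurable u (μ.restrict K))
    (hp : 0 < p) (he : 0 ≤ e) (x₀ : E)
    (h : ∫⁻ y in K, ENNReal.ofReal (|u x₀ - u y| ^ p / ‖x₀ - y‖ ^ e) ∂μ < ∞) :
    MemLp u (ENNReal.ofReal p) (μ.restrict K) := by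
  have : IsFiniteMeasure (μ.restrict K) := isFiniteMeasure_restrict.2 hμK
  have hdiff : MemLp (fun y => u x₀ - u y) (ENNReal.ofReal p) (μ.restrict K) :=
    memLp_ofReal_of_lintegral_ofReal_abs_rpow_lt_top hp (aestronglyMeasurable_const.sub hu)
      (setLIntegral_abs_sub_rpow_lt_top_of_isBounded hKm hKb hp he x₀ h)
  simpa [Pi.sub_def] using (memLp_const (u x₀)).sub hdiff

end Bounded

theorem local_integrability_general (n : ℕ) (p δ : ℝ) (hp : 0 < p)
    (hδ : 0 < δ)
    (G K : Set (EuclideanSpace ℝ (Fin n))) (hK : IsCompact K) (hKG : K ⊆ G)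
    (u : EuclideanSpace ℝ (Fin n) → ℝ) (hu : Measurable u)
    (hfin : ∫⁻ x in G, ∫⁻ y in G,
      ENNReal.ofReal (|u x - u y| ^ p / ‖x - y‖ ^ ((n : ℝ) + δ * p)) < ⊤) :
    MemLp u (ENNReal.ofReal p) (volume.restrict K) := by
  rcases eq_or_ne (volume.restrict K) 0 with hK0 | hK0
  · simp [hK0]
  have hG0 : volume.restrict G ≠ 0 := fun hG0 =>
    hK0 (Measure.restrict_eq_zero.2 (measure_mono_null hKG (Measure.restrict_eq_zero.1 hG0)))
  obtain ⟨x₀, hx₀⟩ := exists_lintegral_lt_top_of_lintegral_lintegral_lt_top hG0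
    (by fun_prop) hfin
  exact memLp_restrict_of_setLIntegral_div_rpow_lt_top hK.measurableSet hK.isBounded
    hK.measure_lt_top.ne hu.aestronglyMeasurable hp (by positivity) x₀
    ((lintegral_mono_set hKG).trans_lt hx₀)

theorem local_integrability (n : ℕ) (p δ : ℝ) (hp : 0 < p)
    (hδ : 0 < δ) (hδ1 : δ < 1)
    (G K : Set (EuclideanSpace ℝ (Fin n))) (hG : IsOpen G) (hK : IsCompact K) (hKG : K ⊆ G)
    (u : EuclideanSpace ℝ (Fin n) → ℝ) (hu : Measurable u)
    (hfin : ∫⁻ x in G, ∫⁻ y in G,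
      ENNReal.ofReal (|u x - u y| ^ p / ‖x - y‖ ^ ((n : ℝ) + δ * p)) < ⊤) :
    MemLp u (ENNReal.ofReal p) (volume.restrict K) :=
  local_integrability_general n p δ hp hδ G K hK hKG u hu hfin
end
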